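/- For all a ≤ b in P, the element a_1·T(b) − T(a)·R(a,b)·b_1 lies in the ideal J(2,P). -/

import Mathlib

open scoped Classical

noncomputable section

namespace LP2

variable (k : Type) [Field k] (P : Type) [Fintype P] [PartialOrder P]
variable (root : P) (parent : P → P)

/-- Index set for the `u`-variables: `none` is `u_{∅,ρ}`, and `some ⟨(q,p),_⟩` is
`u_{q,p}` for the pairs `(q,p)` such that the meet of `q` and `p` is the parent of `p`
(in a tree order this means `parent p ≤ q` and `¬ p ≤ q`). -/
abbrev UPair : Type := {qp : P × P // qp.2 ≠ root ∧ parent qp.2 ≤ qp.1 ∧ ¬ qp.2 ≤ qp.1}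

/-- The variables of the ring `B(2,P)`. -/
abbrev Vars : Type := (Fin 2 × P) ⊕ (Option (UPair P root parent))

/-- The ring `B(2,P) = B ⊗_k k[x_{[2]×P}]`. -/
abbrev BR := MvPolynomial (Vars P root parent) k

/-- The variable `p₁ = x_{1,p}`. -/
def x1 (p : P) : BR k P root parent := MvPolynomial.X (Sum.inl ((0 : Fin 2), p))

/-- The variable `p₂ = x_{2,p}`. -/
def x2 (p : P) : BR k P root parent := MvPolynomial.X (Sum.inl ((1 : Fin 2), p))

/-- The variable `u_{∅,ρ}`. -/
def u0 : BR k P root parent := MvPolynomial.X (Sum.inr none)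

/-- The variable `u_{q,p}` (and `0` if `(q,p)` is not a valid pair). -/
def uv (q p : P) : BR k P root parent :=
  if h : p ≠ root ∧ parent p ≤ q ∧ ¬ p ≤ q then
    MvPolynomial.X (Sum.inr (some ⟨(q, p), h⟩)) else 0

/-- `T_c(b) = - ∑_{q ≥ c} q₂ u_{q,b}`, for `c` a sibling of `b` distinct from `b`. -/
def Tc (c b : P) : BR k P root parent :=
  - ∑ q ∈ Finset.univ.filter (fun q => c ≤ q), x2 k P root parent q * uv k P root parent q b

/-- `T_a(b) = - a₂ u_{a,b}` where `a` is the parent of `b`. -/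
def Tpar (b : P) : BR k P root parent :=
  - x2 k P root parent (parent b) * uv k P root parent (parent b) b

/-- The set of siblings of `b` (including `b` itself). -/
def sib (b : P) : Finset P := Finset.univ.filter (fun c => c ≠ root ∧ parent c = parent b)

/-- `T(ρ) = u_{∅,ρ}` and `T(b) = -T_a(b) - ∑_{c sibling of b, c ≠ b} T_c(b)`. -/
def T (b : P) : BR k P root parent :=
  if b = root then u0 k P root parent
  else - Tpar k P root parent b - ∑ c ∈ (sib P root parent b).erase b, Tc k P root parent c b

/-- The set of children of `a`. -/
def children (a : P) : Finset P := Finset.univ.filter (fun b => b ≠ root ∧ parent b = a)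

/-- The symbol `S_cT_c(b)`:  it is `b₁` if `c = b`, `-u_{c,b}` if `c` is the parent of `b`,
and `S_c(T_c(b)) = - ∑_{q ≥ c} S_c(q₂) u_{q,b}` if `c` is a sibling of `b` distinct from `b`. -/
def ST (Sx : P → P → BR k P root parent) (c b : P) : BR k P root parent :=
  if c = b then x1 k P root parent b
  else if c = parent b then - uv k P root parent c b
  else - ∑ q ∈ Finset.univ.filter (fun q => c ≤ q), Sx c q * uv k P root parent q b

/-- The data of the recursively defined elements `D(a)^x` and `S_a(b₂)` of `B(2,P)`,
pinned down by their defining equations.  `hD` says: for any enumeration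
`a = e 0, e 1, …` of `a` together with its children `e 1, …, e m`, the element
`D(a)^{e i}` is the signed maximal minor `(-1)^i |M(a)^{e i}|` of the `m × (m+1)` matrix
`M(a) = [S_{e i}T_{e i}(e (j+1))]`.  (For `a` maximal this gives `D(a)^a = 1`.)
`hSx` says: along any saturated chain `a = c 0 ⋖ c 1 ⋖ ⋯ ⋖ c n = b`,
`S_a(b₂) = R(a,b) D(b)^b` where `R(a,b) = ∏ D(c i)^{c (i+1)}`. -/
structure DefData where
  D : P → P → BR k P root parent
  Sx : P → P → BR k P root parent
  hD : ∀ (a : P) (m : ℕ) (e : Fin (m+1) → P), Function.Injective e → e 0 = a →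
      (∀ j : Fin m, e j.succ ∈ children P root parent a) →
      (∀ b ∈ children P root parent a, ∃ j : Fin m, e j.succ = b) →
      ∀ i : Fin (m+1),
        D a (e i) = (-1 : BR k P root parent) ^ (i : ℕ) *
          Matrix.det (Matrix.of fun (j l : Fin m) =>
            ST k P root parent Sx (e (i.succAbove l)) (e j.succ))
  hSx : ∀ (n : ℕ) (c : Fin (n+1) → P),
      (∀ i : Fin n, c i.castSucc ⋖ c i.succ) →
      Sx (c 0) (c (Fin.last n)) =
        (∏ i : Fin n, D (c i.castSucc) (c i.succ)) * D (c (Fin.last n)) (c (Fin.last n))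

/-- The ideal `J(2,P)`, generated by the deformations `p₁q₂ - T(p)S_p(q₂)` for `p ≤ q`. -/
def Jideal (dd : DefData k P root parent) : Ideal (BR k P root parent) :=
  Ideal.span {f | ∃ p q : P, p ≤ q ∧
    f = x1 k P root parent p * x2 k P root parent q - T k P root parent p * dd.Sx p q}


section Aux
variable {P : Type} [Fintype P] [PartialOrder P]

lemma exists_cov_le {p q : P} (h : p < q) : ∃ r, p ⋖ r ∧ r ≤ q := by
  classical
  have hne : (Finset.univ.filter (fun x => p < x ∧ x ≤ q)).Nonempty :=
    ⟨q, by simp [h, le_refl]⟩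
  obtain ⟨r, hr, hmin⟩ := Finset.exists_minimal hne
  simp only [Finset.mem_filter, Finset.mem_univ, true_and] at hr
  refine ⟨r, ⟨hr.1, fun z hz1 hz2 => ?_⟩, hr.2⟩
  exact absurd (hmin (by simp [hz1, le_trans hz2.le hr.2]) hz2.le) hz2.not_ge

lemma exists_sat_chain : ∀ (N : ℕ) (p q : P),
    (Finset.univ.filter (fun x => p < x ∧ x ≤ q)).card ≤ N → p ≤ q →
    ∃ (n : ℕ) (c : Fin (n+1) → P), (∀ i : Fin n, c i.castSucc ⋖ c i.succ) ∧ c 0 = p ∧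
      c (Fin.last n) = q := by
  classical
  intro N
  induction N with
  | zero =>
    intro p q hcard hle
    have : p = q := by
      by_contra hne
      have : q ∈ Finset.univ.filter (fun x => p < x ∧ x ≤ q) := by
        simp [lt_of_le_of_ne hle hne]
      have := Finset.card_pos.2 ⟨q, this⟩
      omega
    exact ⟨0, fun _ => p, by intro i; exact i.elim0, rfl, this⟩
  | succ N ih =>
    intro p q hcard hle
    rcases eq_or_lt_of_le hle with rfl | hlt
    · exact ⟨0, fun _ => p, by intro i; exact i.elim0, rfl, rfl⟩
    · obtain ⟨r, hpr, hrq⟩ := exists_cov_le hlt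
      have hsub : (Finset.univ.filter (fun x => r < x ∧ x ≤ q)) ⊆
          (Finset.univ.filter (fun x => p < x ∧ x ≤ q)).erase r := by
        intro x hx
        simp only [Finset.mem_filter, Finset.mem_univ, true_and] at hx
        refine Finset.mem_erase.2 ⟨fun hxr => by simp [hxr] at hx, ?_⟩
        simp [hx.2, lt_trans hpr.lt hx.1]
      have hrmem : r ∈ Finset.univ.filter (fun x => p < x ∧ x ≤ q) := by
        simp [hpr.lt, hrq]
      have hlt' : (Finset.univ.filter (fun x => r < x ∧ x ≤ q)).card ≤ N := by
        have := Finset.card_le_card hsub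
        have := Finset.card_erase_of_mem hrmem
        omega
      obtain ⟨n, c, hcc, hc0, hcl⟩ := ih r q hlt' hrq
      refine ⟨n+1, Fin.cons p c, ?_, rfl, ?_⟩
      · intro i
        refine Fin.cases ?_ ?_ i
        · simpa [Fin.castSucc_zero, hc0] using hpr
        · intro j
          have := hcc j
          simpa using this
      · rw [show (Fin.last (n+1)) = (Fin.last n).succ from rfl, Fin.cons_succ, hcl]

omit [Fintype P] in
lemma chain_mono {n : ℕ} {c : Fin (n+1) → P}
    (hc : ∀ i : Fin n, c i.castSucc ⋖ c i.succ) : Monotone c :=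
  (Fin.strictMono_iff_lt_succ.2 fun i => (hc i).lt).monotone

lemma cov_unique {b y z : P}
    (htree : ∀ b : P, IsChain (· ≤ ·) {a : P | a ≤ b})
    (hy : y ⋖ b) (hz : z ⋖ b) : y = z := by
  rcases eq_or_ne y z with h | h
  · exact h
  · rcases (htree b) (show y ∈ {a : P | a ≤ b} from hy.le) (show z ∈ {a | a ≤ b} from hz.le) h with h' | h'
    · exact absurd hz.lt (hy.2 (lt_of_le_of_ne h' h))
    · exact absurd hy.lt (hz.2 (lt_of_le_of_ne h' (Ne.symm h)))

end Aux
section Aux2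
variable {k : Type} [Field k] {P : Type} [Fintype P] [PartialOrder P]
variable {root : P} {parent : P → P} (dd : DefData k P root parent)

lemma Sx_self (x : P) : dd.Sx x x = dd.D x x := by
  have := dd.hSx 0 (fun _ => x) (fun i => i.elim0)
  simpa using this

lemma Sx_comp {p r q : P} (h1 : p ⋖ r) (h2 : r ≤ q) :
    dd.Sx p q = dd.D p r * dd.Sx r q := by
  obtain ⟨n, c, hcc, hc0, hcl⟩ := exists_sat_chain
    (Finset.univ.filter (fun x => r < x ∧ x ≤ q)).card r q le_rfl h2
  have hcov' : ∀ i : Fin (n+1), (Fin.cons p c : Fin (n+2) → P) i.castSucc ⋖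
      (Fin.cons p c : Fin (n+2) → P) i.succ := by
    intro i
    refine Fin.cases ?_ ?_ i
    · simpa [hc0] using h1
    · intro j
      simpa using hcc j
  have e1 := dd.hSx (n+1) (Fin.cons p c) hcov'
  have e2 := dd.hSx n c hcc
  rw [hc0] at e2
  have hlast : (Fin.cons p c : Fin (n+2) → P) (Fin.last (n+1)) = q := by
    rw [show (Fin.last (n+1)) = (Fin.last n).succ from rfl, Fin.cons_succ, hcl]
  rw [show (Fin.cons p c : Fin (n+2) → P) 0 = p from rfl, hlast] at e1
  rw [hcl] at e2
  rw [e1, e2, Fin.prod_univ_succ]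
  have h0 : (Fin.cons p c : Fin (n+2) → P) ((0 : Fin (n+1)).castSucc) = p := by
    simp
  have h0' : (Fin.cons p c : Fin (n+2) → P) ((0 : Fin (n+1)).succ) = c 0 := by
    simp
  rw [h0, h0', hc0]
  rw [mul_assoc]
  congr 1

lemma Sx_chain_comp : ∀ (n : ℕ) (c : Fin (n+1) → P),
    (∀ i : Fin n, c i.castSucc ⋖ c i.succ) → ∀ x : P, c (Fin.last n) ≤ x →
    dd.Sx (c 0) x =
      (∏ i : Fin n, dd.D (c i.castSucc) (c i.succ)) * dd.Sx (c (Fin.last n)) x := by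
  intro n
  induction n with
  | zero => intro c hc x hx; simp
  | succ n ih =>
    intro c hc x hx
    have h01 : c 0 ⋖ c 1 := by simpa using hc 0
    have h1x : c 1 ≤ x := by
      refine le_trans ?_ hx
      exact chain_mono hc (by
        simp [Fin.le_def])
    have step := Sx_comp dd h01 h1x
    have tail : dd.Sx (c 1) x =
        (∏ i : Fin n, dd.D (c i.succ.castSucc) (c i.succ.succ)) * dd.Sx (c (Fin.last n).succ) x := by
      simpa using ih (fun i => c i.succ) (fun i => by
        simpa using hc i.succ) x (by simpa using hx)
    rw [step, tail, Fin.prod_univ_succ, mul_assoc]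
    simp [Fin.succ_last]

lemma key_det (hpar : ∀ p : P, p ≠ root → parent p ⋖ p)
    (b' b : P) (hb : b ∈ children P root parent b') :
    ∑ x ∈ insert b' (children P root parent b'),
      dd.D b' x * ST k P root parent dd.Sx x b = 0 := by
  classical
  set m' := (children P root parent b').card with hm
  set σ : Fin m' ≃ {x // x ∈ children P root parent b'} :=
    (children P root parent b').equivFin.symm with hσ
  set e : Fin (m'+1) → P := Fin.cons b' (fun j => (σ j : P)) with he
  have he0 : e 0 = b' := rfl
  have hesucc : ∀ j : Fin m', e j.succ = (σ j : P) := fun j => by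
    rw [he]; exact Fin.cons_succ _ _ _
  have hchild : ∀ j : Fin m', e j.succ ∈ children P root parent b' := fun j => by
    rw [hesucc]; exact (σ j).2
  have hb'notchild : b' ∉ children P root parent b' := by
    intro h
    simp only [children, Finset.mem_filter, Finset.mem_univ, true_and] at h
    exact (hpar b' h.1).ne h.2
  have hinj : Function.Injective e := by
    intro i1 i2 h
    induction i1 using Fin.cases with
    | zero =>
      induction i2 using Fin.cases with
      | zero => rfl
      | succ j => rw [he0] at h; exact absurd (h ▸ hchild j) hb'notchild
    | succ j1 =>
      induction i2 using Fin.cases with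
      | zero => rw [he0] at h; exact absurd (h ▸ hchild j1) hb'notchild
      | succ j2 =>
        rw [hesucc, hesucc] at h
        have : σ j1 = σ j2 := Subtype.ext h
        rw [σ.injective this]
  have hsurj : ∀ x ∈ children P root parent b', ∃ j : Fin m', e j.succ = x := by
    intro x hx
    refine ⟨σ.symm ⟨x, hx⟩, ?_⟩
    rw [hesucc]
    simp
  obtain ⟨j0, hj0⟩ := hsurj b hb
  set g : Fin (m'+1) → P := Fin.cons b (fun j => e j.succ) with hg
  set N : Matrix (Fin (m'+1)) (Fin (m'+1)) (BR k P root parent) :=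
    Matrix.of (fun j i => ST k P root parent dd.Sx (e i) (g j)) with hN
  have hg0 : g 0 = b := rfl
  have hgsucc : ∀ j : Fin m', g j.succ = e j.succ := fun j => by
    rw [hg]; exact Fin.cons_succ _ _ _
  have hdet0 : N.det = 0 := by
    refine Matrix.det_zero_of_row_eq (M := N) (i := (0 : Fin (m'+1))) (j := j0.succ)
      (Ne.symm (Fin.succ_ne_zero j0)) ?_
    funext i
    show ST k P root parent dd.Sx (e i) (g 0) = ST k P root parent dd.Sx (e i) (g j0.succ)
    rw [hg0, hgsucc, hj0]
  have hsub : ∀ i : Fin (m'+1), N.submatrix Fin.succ i.succAbove =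
      Matrix.of (fun (j l : Fin m') => ST k P root parent dd.Sx (e (i.succAbove l)) (e j.succ)) := by
    intro i
    funext j l
    show N j.succ (i.succAbove l) = _
    show ST k P root parent dd.Sx (e (i.succAbove l)) (g j.succ) = _
    rw [hgsucc]
    rfl
  have hsum0 : ∑ i : Fin (m'+1), dd.D b' (e i) * ST k P root parent dd.Sx (e i) b = 0 := by
    calc ∑ i : Fin (m'+1), dd.D b' (e i) * ST k P root parent dd.Sx (e i) b
        = ∑ i : Fin (m'+1), (-1 : BR k P root parent)^(i:ℕ) * N 0 i *
            (N.submatrix Fin.succ i.succAbove).det := by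
          refine Finset.sum_congr rfl (fun i _ => ?_)
          rw [dd.hD b' m' e hinj he0 hchild hsurj i, hsub i]
          have hN0 : N 0 i = ST k P root parent dd.Sx (e i) b := by
            show ST k P root parent dd.Sx (e i) (g 0) = _
            rw [hg0]
          rw [hN0]
          ring
      _ = N.det := (Matrix.det_succ_row_zero N).symm
      _ = 0 := hdet0
  have hsplit : ∑ i : Fin (m'+1), dd.D b' (e i) * ST k P root parent dd.Sx (e i) b =
      ∑ x ∈ insert b' (children P root parent b'),
        dd.D b' x * ST k P root parent dd.Sx x b := by
    rw [Fin.sum_univ_succ, Finset.sum_insert hb'notchild, he0]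
    congr 1
    have h1 : ∑ j : Fin m', dd.D b' (e j.succ) * ST k P root parent dd.Sx (e j.succ) b =
        ∑ j : Fin m', dd.D b' ((σ j : P)) * ST k P root parent dd.Sx ((σ j : P)) b :=
      Finset.sum_congr rfl (fun j _ => by rw [hesucc])
    rw [h1]
    have h2 : ∑ j : Fin m', dd.D b' ((σ j : P)) * ST k P root parent dd.Sx ((σ j : P)) b
        = ∑ x : {x // x ∈ children P root parent b'},
            dd.D b' (x : P) * ST k P root parent dd.Sx (x : P) b :=
      Equiv.sum_comp σ (fun x : {x // x ∈ children P root parent b'} =>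
        dd.D b' (x : P) * ST k P root parent dd.Sx (x : P) b)
    have h3 : (∑ x : {x // x ∈ children P root parent b'},
          dd.D b' (x : P) * ST k P root parent dd.Sx (x : P) b)
        = ∑ x ∈ children P root parent b', dd.D b' x * ST k P root parent dd.Sx x b :=
      Finset.sum_coe_sort (children P root parent b')
        (fun x => dd.D b' x * ST k P root parent dd.Sx x b)
    rw [h2, h3]
  rw [← hsplit, hsum0]

lemma star (hroot : ∀ p : P, root ≤ p)
    (htree : ∀ b : P, IsChain (· ≤ ·) {a : P | a ≤ b})
    (hpar : ∀ p : P, p ≠ root → parent p ⋖ p)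
    (b : P) (hb : b ≠ root) :
    dd.D (parent b) (parent b) * uv k P root parent (parent b) b +
      ∑ c' ∈ (sib P root parent b).erase b, dd.D (parent b) c' *
        (∑ q ∈ Finset.univ.filter (fun q => c' ≤ q),
          dd.Sx c' q * uv k P root parent q b)
    = dd.D (parent b) b * x1 k P root parent b := by
  classical
  have hbchild : b ∈ children P root parent (parent b) := by
    simp [children, hb]
  have hnotmem : parent b ∉ children P root parent (parent b) := by
    intro h
    simp only [children, Finset.mem_filter, Finset.mem_univ, true_and] at h
    exact (hpar (parent b) h.1).ne h.2
  have hkey := key_det dd hpar (parent b) b hbchild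
  rw [Finset.sum_insert hnotmem, ← Finset.sum_erase_add _ _ hbchild] at hkey
  have hsibch : (children P root parent (parent b)) = sib P root parent b := rfl
  rw [hsibch] at hkey
  have h1 : ST k P root parent dd.Sx (parent b) b = - uv k P root parent (parent b) b := by
    rw [ST, if_neg (hpar b hb).ne, if_pos rfl]
  have h2 : ST k P root parent dd.Sx b b = x1 k P root parent b := by
    rw [ST, if_pos rfl]
  have h3 : ∀ c' ∈ (sib P root parent b).erase b,
      dd.D (parent b) c' * ST k P root parent dd.Sx c' b
      = - (dd.D (parent b) c' * ∑ q ∈ Finset.univ.filter (fun q => c' ≤ q),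
          dd.Sx c' q * uv k P root parent q b) := by
    intro c' hc'
    obtain ⟨hne, hcs⟩ := Finset.mem_erase.1 hc'
    simp only [sib, Finset.mem_filter, Finset.mem_univ, true_and] at hcs
    have hcp : c' ≠ parent b := by
      intro h
      exact (hpar c' hcs.1).ne (hcs.2.trans h.symm)
    rw [ST, if_neg hne, if_neg hcp, mul_neg]
  rw [h1, h2, Finset.sum_congr rfl h3, Finset.sum_neg_distrib] at hkey
  linear_combination -hkey

lemma key (hroot : ∀ p : P, root ≤ p)
    (htree : ∀ b : P, IsChain (· ≤ ·) {a : P | a ≤ b})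
    (hpar : ∀ p : P, p ≠ root → parent p ⋖ p)
    (m : ℕ) (c : Fin (m+2) → P)
    (hc : ∀ i : Fin (m+1), c i.castSucc ⋖ c i.succ) :
    dd.Sx (c 0) (parent (c (Fin.last (m+1)))) *
        uv k P root parent (parent (c (Fin.last (m+1)))) (c (Fin.last (m+1)))
      + ∑ c' ∈ (sib P root parent (c (Fin.last (m+1)))).erase (c (Fin.last (m+1))),
          ∑ q ∈ Finset.univ.filter (fun q => c' ≤ q),
            dd.Sx (c 0) q * uv k P root parent q (c (Fin.last (m+1)))
    = (∏ i : Fin (m+1), dd.D (c i.castSucc) (c i.succ)) *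
        x1 k P root parent (c (Fin.last (m+1))) := by
  classical
  set b := c (Fin.last (m+1)) with hbdef
  set w := c ((Fin.last m).castSucc) with hwdef
  have hwb : w ⋖ b := hc (Fin.last m)
  have hbroot : b ≠ root := by
    intro h
    exact absurd (h ▸ hwb.lt) (hroot w).not_gt
  have hparb : parent b = w := cov_unique htree (hpar b hbroot) hwb
  have hcpre : ∀ i : Fin m, (fun i : Fin (m+1) => c i.castSucc) i.castSucc ⋖
      (fun i : Fin (m+1) => c i.castSucc) i.succ := by
    intro i
    simpa [← Fin.succ_castSucc] using hc i.castSucc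
  set R' := ∏ i : Fin m, dd.D (c i.castSucc.castSucc) (c i.succ.castSucc) with hR'
  have e1 : dd.Sx (c 0) (parent b) = R' * dd.D (parent b) (parent b) := by
    rw [hparb]
    have := Sx_chain_comp dd m (fun i : Fin (m+1) => c i.castSucc) hcpre w le_rfl
    rw [Sx_self dd] at this
    simpa [← hwdef, hR'] using this
  have e2 : ∀ c' ∈ (sib P root parent b).erase b,
      ∀ q ∈ Finset.univ.filter (fun q => c' ≤ q),
      dd.Sx (c 0) q = R' * (dd.D (parent b) c' * dd.Sx c' q) := by
    intro c' hc' q hq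
    obtain ⟨hne, hcs⟩ := Finset.mem_erase.1 hc'
    simp only [sib, Finset.mem_filter, Finset.mem_univ, true_and] at hcs
    have hbc' : parent b ⋖ c' := by
      rw [← hcs.2]; exact hpar c' hcs.1
    have hwc' : w ⋖ c' := hparb ▸ hbc'
    have hcq : c' ≤ q := by
      simpa using hq
    have h1 : dd.Sx (c 0) q = R' * dd.Sx w q := by
      have := Sx_chain_comp dd m (fun i : Fin (m+1) => c i.castSucc) hcpre q
        (le_trans hwc'.le hcq)
      simpa [← hwdef, hR'] using this
    have h2 : dd.Sx w q = dd.D w c' * dd.Sx c' q := Sx_comp dd hwc' hcq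
    rw [h1, h2, hparb]
  have hstar := star dd hroot htree hpar b hbroot
  have hRsplit : (∏ i : Fin (m+1), dd.D (c i.castSucc) (c i.succ)) =
      R' * dd.D (parent b) b := by
    rw [hparb, Fin.prod_univ_castSucc, hR']
    congr 1
  have e2' : (∑ c' ∈ (sib P root parent b).erase b,
        ∑ q ∈ Finset.univ.filter (fun q => c' ≤ q),
          dd.Sx (c 0) q * uv k P root parent q b)
      = ∑ c' ∈ (sib P root parent b).erase b,
          R' * (dd.D (parent b) c' * ∑ q ∈ Finset.univ.filter (fun q => c' ≤ q),
            dd.Sx c' q * uv k P root parent q b) := by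
    refine Finset.sum_congr rfl fun c' hc' => ?_
    rw [Finset.mul_sum, Finset.mul_sum]
    refine Finset.sum_congr rfl fun q hq => ?_
    rw [e2 c' hc' q hq]
    ring
  rw [e2', e1, hRsplit]
  conv_rhs => rw [mul_assoc, ← hstar, mul_add, Finset.mul_sum]
  ring

end Aux2

/-- For all `a ≤ b` in `P`, the element
`a₁·T(b) − T(a)·R(a,b)·b₁` lies in `J(2,P)`.  Here `R(a,b) = ∏ D(p)^q` over the
covering relations `a ≤ p ⋖ q ≤ b`, expressed via a saturated chain
`a = c 0 ⋖ c 1 ⋖ ⋯ ⋖ c n = b`. -/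
theorem aT_sub_TRb_mem
    (hroot : ∀ p : P, root ≤ p)
    (htree : ∀ b : P, IsChain (· ≤ ·) {a : P | a ≤ b})
    (hpar : ∀ p : P, p ≠ root → parent p ⋖ p)
    (dd : DefData k P root parent)
    (n : ℕ) (c : Fin (n+1) → P)
    (hc : ∀ i : Fin n, c i.castSucc ⋖ c i.succ) :
    x1 k P root parent (c 0) * T k P root parent (c (Fin.last n)) -
      T k P root parent (c 0) * (∏ i : Fin n, dd.D (c i.castSucc) (c i.succ)) *
        x1 k P root parent (c (Fin.last n))
      ∈ Jideal k P root parent dd := by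
  classical
  cases n with
  | zero =>
    have hz : x1 k P root parent (c 0) * T k P root parent (c (Fin.last 0)) -
        T k P root parent (c 0) * (∏ i : Fin 0, dd.D (c i.castSucc) (c i.succ)) *
          x1 k P root parent (c (Fin.last 0)) = 0 := by
      rw [show (Fin.last 0) = 0 from rfl]
      simp only [Finset.univ_eq_empty, Finset.prod_empty]
      ring
    rw [hz]
    exact Ideal.zero_mem _
  | succ m =>
    have hwb : c ((Fin.last m).castSucc) ⋖ c (Fin.last (m+1)) := hc (Fin.last m)
    have hbroot : c (Fin.last (m+1)) ≠ root := fun h =>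
      absurd (h ▸ hwb.lt) (hroot _).not_gt
    have hparb : parent (c (Fin.last (m+1))) = c ((Fin.last m).castSucc) :=
      cov_unique htree (hpar _ hbroot) hwb
    have hTb : T k P root parent (c (Fin.last (m+1))) =
        x2 k P root parent (parent (c (Fin.last (m+1)))) *
          uv k P root parent (parent (c (Fin.last (m+1)))) (c (Fin.last (m+1)))
        + ∑ c' ∈ (sib P root parent (c (Fin.last (m+1)))).erase (c (Fin.last (m+1))),
            ∑ q ∈ Finset.univ.filter (fun q => c' ≤ q),
              x2 k P root parent q * uv k P root parent q (c (Fin.last (m+1))) := by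
      rw [T, if_neg hbroot]
      simp only [Tpar, Tc, Finset.sum_neg_distrib]
      ring
    have hkey := key dd hroot htree hpar m c hc
    have hmem : ∀ x : P, c 0 ≤ x →
        (x1 k P root parent (c 0) * x2 k P root parent x -
          T k P root parent (c 0) * dd.Sx (c 0) x) ∈ Jideal k P root parent dd :=
      fun x hx => Ideal.subset_span ⟨c 0, x, hx, rfl⟩
    have hab' : c 0 ≤ parent (c (Fin.last (m+1))) := by
      rw [hparb]
      exact chain_mono hc (Fin.zero_le _)
    have haq : ∀ c' ∈ (sib P root parent (c (Fin.last (m+1)))).erase (c (Fin.last (m+1))),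
        ∀ q ∈ Finset.univ.filter (fun q => c' ≤ q), c 0 ≤ q := by
      intro c' hc' q hq
      obtain ⟨hne, hcs⟩ := Finset.mem_erase.1 hc'
      simp only [sib, Finset.mem_filter, Finset.mem_univ, true_and] at hcs
      have hbc' : parent (c (Fin.last (m+1))) ⋖ c' := by
        rw [← hcs.2]; exact hpar c' hcs.1
      have hcq : c' ≤ q := by simpa using hq
      exact le_trans (le_trans hab' hbc'.le) hcq
    have hEq : x1 k P root parent (c 0) * T k P root parent (c (Fin.last (m+1))) -
        T k P root parent (c 0) * (∏ i : Fin (m+1), dd.D (c i.castSucc) (c i.succ)) *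
          x1 k P root parent (c (Fin.last (m+1)))
        = (x1 k P root parent (c 0) * x2 k P root parent (parent (c (Fin.last (m+1)))) -
            T k P root parent (c 0) * dd.Sx (c 0) (parent (c (Fin.last (m+1))))) *
              uv k P root parent (parent (c (Fin.last (m+1)))) (c (Fin.last (m+1)))
          + ∑ c' ∈ (sib P root parent (c (Fin.last (m+1)))).erase (c (Fin.last (m+1))),
              ∑ q ∈ Finset.univ.filter (fun q => c' ≤ q),
                (x1 k P root parent (c 0) * x2 k P root parent q -
                  T k P root parent (c 0) * dd.Sx (c 0) q) *
                    uv k P root parent q (c (Fin.last (m+1))) := by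
      rw [hTb]
      simp only [sub_mul, Finset.sum_sub_distrib, mul_assoc, ← Finset.mul_sum]
      linear_combination (T k P root parent (c 0)) * hkey
    rw [hEq]
    refine Ideal.add_mem _
      (Ideal.mul_mem_right _ _ (hmem _ hab'))
      (Ideal.sum_mem _ fun c' hc' => Ideal.sum_mem _ fun q hq =>
        Ideal.mul_mem_right _ _ (hmem q (haq c' hc' q hq)))

end LP2
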